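/- Define polynomials P_k ∈ (ℤ/2)[w] for k ≡ 1,3,7,9 (mod 20), k > 0, by P_{10n−9} = w^{−3}α_n(w^{10}) + w^{−7}δ_n(w^{10}), P_{10n−7} = w^{−9}β_n(w^{10}) + w^{−1}δ_n(w^{10}), P_{10n−3} = w^{−1}α_n(w^{10}) + w^{−9}γ_n(w^{10}), P_{10n−1} = w^{−7}β_n(w^{10}) + w^{−3}γ_n(w^{10}), where n is odd. Then each P_k lies in (ℤ/2)[w], the P_k satisfy P_{k+80} = w^{80}·P_k + w^{20}·P_{k+20}, and P₁ = 0, P₃ = w, P₇ = 0, P₉ = w³. -/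

import Mathlib

open Polynomial

/-!
Each of `α, β, γ, δ` is divisible by `t` at odd indices, since `t` divides the initial values
and the recursion preserves divisibility by `t`. Substituting `t = w¹⁰` therefore makes `w¹⁰`
divide `αₙ(w¹⁰), …, δₙ(w¹⁰)`, so the divisions by `w⁷` and `w⁹` defining `P` are exact. The
substitution turns the recursion into `Aₙ₊₈ = w⁸⁰Aₙ + w²⁰Aₙ₊₂`, which is linear over `(ℤ/2)[w]`
and survives exact division; since `k ↦ k + 20` is `n ↦ n + 2`, `P` inherits it.
-/

def IsOddRec {R : Type*} [Semiring R] (a b : R) (A : ℕ → R) : Prop :=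
  ∀ n, Odd n → A (n + 8) = a * A n + b * A (n + 2)

namespace IsOddRec

section CommSemiring

variable {R : Type*} [CommSemiring R] {a b : R} {A B : ℕ → R}

theorem dvd (h : IsOddRec a b A) {d : R} (h1 : d ∣ A 1) (h3 : d ∣ A 3) (h5 : d ∣ A 5)
    (h7 : d ∣ A 7) {n : ℕ} (hn : Odd n) : d ∣ A n := by
  suffices ∀ m,
      d ∣ A (2 * m + 1) ∧ d ∣ A (2 * m + 3) ∧ d ∣ A (2 * m + 5) ∧ d ∣ A (2 * m + 7) by
    obtain ⟨m, rfl⟩ := hn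
    exact (this m).1
  intro m
  induction m with
  | zero => exact ⟨h1, h3, h5, h7⟩
  | succ m ih =>
    obtain ⟨d1, d3, d5, d7⟩ := ih
    have d9 : d ∣ A (2 * m + 1 + 8) := by
      rw [h _ ⟨m, rfl⟩]
      exact dvd_add (d1.mul_left a) (d3.mul_left b)
    exact ⟨d3, d5, d7, d9⟩

theorem linear_comb (hA : IsOddRec a b A) (hB : IsOddRec a b B) (u v : R) :
    IsOddRec a b (fun n ↦ u * A n + v * B n) := by
  intro n hn
  simp only [hA n hn, hB n hn]
  ring

end CommSemiring

theorem div {R : Type*} [EuclideanDomain R] {a b : R} {A : ℕ → R} (h : IsOddRec a b A) {d : R}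
    (hd : ∀ n, Odd n → d ∣ A n) : IsOddRec a b (fun n ↦ A n / d) := by
  intro n hn
  rcases eq_or_ne d 0 with rfl | hd0
  · simp
  apply mul_left_cancel₀ hd0
  rw [mul_add, mul_left_comm d a, mul_left_comm d b,
    EuclideanDomain.mul_div_cancel' hd0 (hd _ (hn.add_even (by decide))),
    EuclideanDomain.mul_div_cancel' hd0 (hd _ hn),
    EuclideanDomain.mul_div_cancel' hd0 (hd _ (hn.add_even (by decide))), h n hn]

end IsOddRec

section Polynomial

variable {R : Type*} [CommSemiring R]

theorem X_pow_dvd_comp_X_pow {f : R[X]} (k : ℕ) (hf : X ∣ f) : X ^ k ∣ f.comp (X ^ k) := by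
  have h := map_dvd (expand R k) hf
  rwa [expand_X] at h

theorem isOddRec_comp_X_pow {A : ℕ → R[X]} (h : IsOddRec (X ^ 8) (X ^ 2) A) :
    IsOddRec (X ^ 80) (X ^ 20) (fun n ↦ (A n).comp (X ^ 10)) := by
  intro n hn
  simp only [h n hn, add_comp, mul_comp, pow_comp, X_comp, ← pow_mul]

end Polynomial

section Field

variable {K : Type*} [Field K]

theorem X_pow_add_div_X_pow (m n : ℕ) : (X : K[X]) ^ (m + n) / X ^ m = X ^ n := by
  rw [pow_add, mul_div_cancel_left₀ _ (pow_ne_zero _ X_ne_zero)]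

noncomputable def combine (i j c : ℕ) (A B : ℕ → K[X]) (n : ℕ) : K[X] :=
  (X ^ i * (A n).comp (X ^ 10) + X ^ j * (B n).comp (X ^ 10)) / X ^ c

variable {A B : ℕ → K[X]} {i j c : ℕ}

theorem X_pow_mul_combine (hc : c ≤ 10) {n : ℕ} (hA : X ∣ A n) (hB : X ∣ B n) :
    X ^ c * combine i j c A B n = X ^ i * (A n).comp (X ^ 10) + X ^ j * (B n).comp (X ^ 10) :=
  EuclideanDomain.mul_div_cancel' (pow_ne_zero _ X_ne_zero) <|
    (pow_dvd_pow X hc).trans <| dvd_add ((X_pow_dvd_comp_X_pow 10 hA).mul_left _)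
      ((X_pow_dvd_comp_X_pow 10 hB).mul_left _)

theorem isOddRec_combine (hc : c ≤ 10) (hA : IsOddRec (X ^ 8) (X ^ 2) A)
    (hB : IsOddRec (X ^ 8) (X ^ 2) B) (hXA : ∀ n, Odd n → X ∣ A n)
    (hXB : ∀ n, Odd n → X ∣ B n) :
    IsOddRec (X ^ 80) (X ^ 20) (combine i j c A B) :=
  ((isOddRec_comp_X_pow hA).linear_comb (isOddRec_comp_X_pow hB) _ _).div fun n hn ↦
    ⟨combine i j c A B n, (X_pow_mul_combine hc (hXA n hn) (hXB n hn)).symm⟩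

noncomputable def residueSeq (α β γ δ : ℕ → K[X]) : ℕ → ℕ → K[X]
  | 1 => combine 4 0 7 α δ
  | 3 => combine 0 8 9 β δ
  | 7 => combine 8 0 9 α γ
  | _ => combine 0 4 7 β γ

/-- `P_k`: writing `k = 10n - r` with `0 < r < 10` gives `n = k / 10 + 1` and `k % 10 = 10 - r`,
so `residueSeq _ _ _ _ (10 - r)` is `n ↦ P_{10n-r}`. -/
noncomputable def interleave (α β γ δ : ℕ → K[X]) (k : ℕ) : K[X] :=
  residueSeq α β γ δ (k % 10) (k / 10 + 1)

variable {α β γ δ : ℕ → K[X]}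

theorem interleave_ten_mul_sub {n r : ℕ} (hn : 0 < n) (hr : 0 < r) (hr' : r < 10) :
    interleave α β γ δ (10 * n - r) = residueSeq α β γ δ (10 - r) n := by
  rw [interleave, show (10 * n - r) % 10 = 10 - r by omega,
    show (10 * n - r) / 10 + 1 = n by omega]

theorem isOddRec_residueSeq (hα : IsOddRec (X ^ 8) (X ^ 2) α) (hβ : IsOddRec (X ^ 8) (X ^ 2) β)
    (hγ : IsOddRec (X ^ 8) (X ^ 2) γ) (hδ : IsOddRec (X ^ 8) (X ^ 2) δ)
    (hXα : ∀ n, Odd n → X ∣ α n) (hXβ : ∀ n, Odd n → X ∣ β n)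
    (hXγ : ∀ n, Odd n → X ∣ γ n) (hXδ : ∀ n, Odd n → X ∣ δ n) (r : ℕ) :
    IsOddRec (X ^ 80) (X ^ 20) (residueSeq α β γ δ r) := by
  unfold residueSeq
  split
  · exact isOddRec_combine (by norm_num) hα hδ hXα hXδ
  · exact isOddRec_combine (by norm_num) hβ hδ hXβ hXδ
  · exact isOddRec_combine (by norm_num) hα hγ hXα hXγ
  · exact isOddRec_combine (by norm_num) hβ hγ hXβ hXγ

theorem interleave_add_eighty {k : ℕ}
    (h : IsOddRec (X ^ 80) (X ^ 20) (residueSeq α β γ δ (k % 10))) (hk : Even (k / 10)) :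
    interleave α β γ δ (k + 80) =
      X ^ 80 * interleave α β γ δ k + X ^ 20 * interleave α β γ δ (k + 20) := by
  simp only [interleave, show (k + 80) % 10 = k % 10 by omega,
    show (k + 20) % 10 = k % 10 by omega, show (k + 80) / 10 + 1 = k / 10 + 1 + 8 by omega,
    show (k + 20) / 10 + 1 = k / 10 + 1 + 2 by omega]
  exact h _ hk.add_one

end Field

theorem stmt_18 (α β γ δ : ℕ → Polynomial (ZMod 2))
    (hα1 : α 1 = 0) (hα3 : α 3 = X) (hα5 : α 5 = 0) (hα7 : α 7 = X ^ 5)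
    (hβ1 : β 1 = X) (hβ3 : β 3 = X ^ 3) (hβ5 : β 5 = X ^ 5) (hβ7 : β 7 = X ^ 7 + X ^ 3)
    (hγ1 : γ 1 = 0) (hγ3 : γ 3 = 0) (hγ5 : γ 5 = X ^ 3) (hγ7 : γ 7 = X ^ 5)
    (hδ1 : δ 1 = 0) (hδ3 : δ 3 = 0) (hδ5 : δ 5 = 0) (hδ7 : δ 7 = X ^ 3)
    (hrecα : ∀ n, Odd n → α (n + 8) = X ^ 8 * α n + X ^ 2 * α (n + 2))
    (hrecβ : ∀ n, Odd n → β (n + 8) = X ^ 8 * β n + X ^ 2 * β (n + 2))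
    (hrecγ : ∀ n, Odd n → γ (n + 8) = X ^ 8 * γ n + X ^ 2 * γ (n + 2))
    (hrecδ : ∀ n, Odd n → δ (n + 8) = X ^ 8 * δ n + X ^ 2 * δ (n + 2)) :
    ∃ P : ℕ → Polynomial (ZMod 2),
      -- the defining formulas `P_{10n-9} = w⁻³αₙ(w¹⁰) + w⁻⁷δₙ(w¹⁰)` etc.,
      -- cleared of negative powers of `w`:
      (∀ n, Odd n →
        X ^ 7 * P (10 * n - 9) = X ^ 4 * (α n).comp (X ^ 10) + (δ n).comp (X ^ 10) ∧
        X ^ 9 * P (10 * n - 7) = (β n).comp (X ^ 10) + X ^ 8 * (δ n).comp (X ^ 10) ∧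
        X ^ 9 * P (10 * n - 3) = X ^ 8 * (α n).comp (X ^ 10) + (γ n).comp (X ^ 10) ∧
        X ^ 7 * P (10 * n - 1) = (β n).comp (X ^ 10) + X ^ 4 * (γ n).comp (X ^ 10)) ∧
      (∀ k, 0 < k → (k % 20 = 1 ∨ k % 20 = 3 ∨ k % 20 = 7 ∨ k % 20 = 9) →
        P (k + 80) = X ^ 80 * P k + X ^ 20 * P (k + 20)) ∧
      P 1 = 0 ∧ P 3 = X ∧ P 7 = 0 ∧ P 9 = X ^ 3 := by
  have hXα : ∀ n, Odd n → X ∣ α n := fun _ ↦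
    IsOddRec.dvd hrecα (by simp [hα1]) (by simp [hα3]) (by simp [hα5]) (by simp [hα7])
  have hXβ : ∀ n, Odd n → X ∣ β n := fun _ ↦
    IsOddRec.dvd hrecβ (by simp [hβ1]) (by simp [hβ3]) (by simp [hβ5])
      (by rw [hβ7]; exact dvd_add (dvd_pow_self X (by norm_num)) (dvd_pow_self X (by norm_num)))
  have hXγ : ∀ n, Odd n → X ∣ γ n := fun _ ↦
    IsOddRec.dvd hrecγ (by simp [hγ1]) (by simp [hγ3]) (by simp [hγ5]) (by simp [hγ7])
  have hXδ : ∀ n, Odd n → X ∣ δ n := fun _ ↦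
    IsOddRec.dvd hrecδ (by simp [hδ1]) (by simp [hδ3]) (by simp [hδ5]) (by simp [hδ7])
  refine ⟨interleave α β γ δ, fun n hn ↦ ?_, fun k _ hk ↦ ?_, ?_, ?_, ?_, ?_⟩
  · refine ⟨?_, ?_, ?_, ?_⟩ <;> rw [interleave_ten_mul_sub hn.pos (by norm_num) (by norm_num)]
    · exact (X_pow_mul_combine (by norm_num) (hXα n hn) (hXδ n hn)).trans (by simp)
    · exact (X_pow_mul_combine (by norm_num) (hXβ n hn) (hXδ n hn)).trans (by simp)
    · exact (X_pow_mul_combine (by norm_num) (hXα n hn) (hXγ n hn)).trans (by simp)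
    · exact (X_pow_mul_combine (by norm_num) (hXβ n hn) (hXγ n hn)).trans (by simp)
  · exact interleave_add_eighty
      (isOddRec_residueSeq hrecα hrecβ hrecγ hrecδ hXα hXβ hXγ hXδ _)
      (Nat.even_iff.mpr (by omega))
  · simp [interleave, residueSeq, combine, hα1, hδ1]
  · simpa [interleave, residueSeq, combine, hβ1, hδ1] using X_pow_add_div_X_pow (K := ZMod 2) 9 1
  · simp [interleave, residueSeq, combine, hα1, hγ1]
  · simpa [interleave, residueSeq, combine, hβ1, hγ1] using X_pow_add_div_X_pow (K := ZMod 2) 7 3
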